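/- arXiv:1812.10362 — 4 statements merged into one kernel-verified Lean document; each statement's English description precedes it below -/
import Mathlib

section
/- Let M₀, M_t, M₁, M_∞ be matrices in SL(2,ℂ) with M₀·M_t·M₁·M_∞ = 1. Then the Jimbo–Fricke cubic relation holds: p_{0t}p_{1t}p_{01} + p_{0t}² + p_{1t}² + p_{01}² − p_{0t}(p₀p_t + p₁p_∞) − p_{1t}(p₁p_t + p₀p_∞) − p_{01}(p₀p₁ + p_t p_∞) + p₀p_t p₁p_∞ + p₀² + p_t² + p₁² + p_∞² − 4 = 0. -/
open Matrix

/-- The Jimbo–Fricke cubic relation for the traces of four `SL(2,ℂ)` matrices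
whose product is the identity. -/
theorem jimbo_fricke_cubic (M0 Mt M1 Minf : Matrix (Fin 2) (Fin 2) ℂ)
    (h0 : M0.det = 1) (ht : Mt.det = 1) (h1 : M1.det = 1) (hinf : Minf.det = 1)
    (hprod : M0 * Mt * M1 * Minf = 1) :
    (M0 * Mt).trace * (M1 * Mt).trace * (M0 * M1).trace
      + (M0 * Mt).trace ^ 2 + (M1 * Mt).trace ^ 2 + (M0 * M1).trace ^ 2
      - (M0 * Mt).trace * (M0.trace * Mt.trace + M1.trace * Minf.trace)
      - (M1 * Mt).trace * (M1.trace * Mt.trace + M0.trace * Minf.trace)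
      - (M0 * M1).trace * (M0.trace * M1.trace + Mt.trace * Minf.trace)
      + M0.trace * Mt.trace * M1.trace * Minf.trace
      + M0.trace ^ 2 + Mt.trace ^ 2 + M1.trace ^ 2 + Minf.trace ^ 2 - 4 = 0 := by
  have hQdet : (M0 * Mt * M1).det = 1 := by
    rw [Matrix.det_mul, Matrix.det_mul, h0, ht, h1]; ring
  have hMinf : Minf = (M0 * Mt * M1).adjugate := by
    have h2 : (M0 * Mt * M1).adjugate * (M0 * Mt * M1) = 1 := by
      rw [Matrix.adjugate_mul, hQdet, one_smul]
    calc Minf = ((M0 * Mt * M1).adjugate * (M0 * Mt * M1)) * Minf := by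
          rw [h2, one_mul]
      _ = (M0 * Mt * M1).adjugate := by rw [mul_assoc, hprod, mul_one]
  subst hMinf
  rw [Matrix.det_fin_two] at h0 ht h1
  simp only [Matrix.trace_fin_two, Matrix.adjugate_fin_two, Matrix.mul_apply,
    Fin.sum_univ_two, Matrix.of_apply, Matrix.cons_val', Matrix.cons_val_zero,
    Matrix.cons_val_one, Matrix.head_cons, Matrix.head_fin_const, Matrix.empty_val',
    Matrix.cons_val_fin_one]
  linear_combination (2 + (-1) * (M1 1 1) * (M1 1 1) + (-1) * (M1 0 0) * (M1 0 0) + (-1) * (Mt 1 1) * (Mt 1 1) + (Mt 1 1) * (Mt 1 1) * (M1 0 0) * (M1 1 1) + (-1) * (Mt 1 0) * (Mt 1 1) * (M1 0 1) * (M1 1 1) + (Mt 1 0) * (Mt 1 1) * (M1 0 0) * (M1 0 1) + (-1) * (Mt 1 0) * (Mt 1 0) * (M1 0 1) * (M1 0 1) + (-1) * (Mt 0 1) * (Mt 1 1) * (M1 1 0) * (M1 1 1) + (Mt 0 1) * (Mt 1 1) * (M1 0 0) * (M1 1 0) + (-1) * (Mt 0 1) * (Mt 0 1) * (M1 1 0)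 * (M1 1 0) + (Mt 0 0) * (Mt 1 1) * (M1 1 1) * (M1 1 1) + (-2) * (Mt 0 0) * (Mt 1 1) * (M1 0 0) * (M1 1 1) + (Mt 0 0) * (Mt 1 1) * (M1 0 0) * (M1 0 0) + (Mt 0 0) * (Mt 1 0) * (M1 0 1) * (M1 1 1) + (-1) * (Mt 0 0) * (Mt 1 0) * (M1 0 0) * (M1 0 1) + (Mt 0 0) * (Mt 0 1) * (M1 1 0) * (M1 1 1) + (-1) * (Mt 0 0) * (Mt 0 1) * (M1 0 0) * (M1 1 0) + (-1) * (Mt 0 0) * (Mt 0 0) + (Mt 0 0) * (Mt 0 0) * (M1 0 0) * (M1 1 1)) * h0 +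
    (2 + (-2) * (M1 0 0) * (M1 1 1) + (-1) * (M0 1 1) * (M0 1 1) + (M0 1 1) * (M0 1 1) * (M1 0 0) * (M1 1 1) + (-1) * (M0 1 0) * (M0 1 1) * (M1 0 1) * (M1 1 1) + (M0 1 0) * (M0 1 1) * (M1 0 0) * (M1 0 1) + (-1) * (M0 1 0) * (M0 1 0) * (M1 0 1) * (M1 0 1) + (-1) * (M0 0 1) * (M0 1 1) * (M1 1 0) * (M1 1 1) + (M0 0 1) * (M0 1 1) * (M1 0 0) * (M1 1 0) + (M0 0 1) * (M0 1 0) * (M1 1 1) * (M1 1 1) + (-2) * (M0 0 1) * (M0 1 0) * (M1 0 0) * (M1 1 1) + (M0 0 1) * (M0 1 0) * (M1 0 0) * (M1 0 0) + (-1) * (M0 0 1) * (M0 0 1) * (M1 1 0) * (M1 1 0) + (M0 0 0) * (M0 1 0) * (M1 0 1) * (M1 1 1) + (-1) * (M0 0 0) * (M0 1 0) * (M1 0 0) * (M1 0 1) + (M0 0 0) * (M0 0 1) * (M1 1 0) * (M1 1 1) + (-1) * (M0 0 0) * (M0 0 1) * (M1 0 0) * (M1 1 0) + (-1) * (M0 0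 0) * (M0 0 0) + (M0 0 0) * (M0 0 0) * (M1 0 0) * (M1 1 1)) * ht +
    ((-2) * (Mt 0 1) * (Mt 1 0) + (M0 1 1) * (M0 1 1) * (Mt 0 1) * (Mt 1 0) + (-1) * (M0 1 0) * (M0 1 1) * (Mt 0 1) * (Mt 1 1) + (M0 1 0) * (M0 1 1) * (Mt 0 0) * (Mt 0 1) + (-1) * (M0 1 0) * (M0 1 0) * (Mt 0 1) * (Mt 0 1) + (-1) * (M0 0 1) * (M0 1 1) * (Mt 1 0) * (Mt 1 1) + (M0 0 1) * (M0 1 1) * (Mt 0 0) * (Mt 1 0) + (-2) * (M0 0 1) * (M0 1 0) + (M0 0 1) * (M0 1 0) * (Mt 1 1) * (Mt 1 1) + (-2) * (M0 0 1) * (M0 1 0) * (Mt 0 1) * (Mt 1 0) + (M0 0 1) * (M0 1 0) * (Mt 0 0) * (Mt 0 0) + (-1) * (M0 0 1) * (M0 0 1) * (Mt 1 0) * (Mt 1 0) + (M0 0 0) * (M0 1 0) * (Mt 0 1) * (Mt 1 1) + (-1) * (M0 0 0) * (M0 1 0) * (Mt 0 0) * (Mt 0 1) + (M0 0 0) * (M0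 0 1) * (Mt 1 0) * (Mt 1 1) + (-1) * (M0 0 0) * (M0 0 1) * (Mt 0 0) * (Mt 1 0) + (M0 0 0) * (M0 0 0) * (Mt 0 1) * (Mt 1 0)) * h1
end

section
/- Let p ≥ 1 be an integer and a, c, a', c' ∈ ℤ. The points of the torus ℝ²/ℤ² represented by (a/p, c/p) and (a'/p, c'/p) lie in the same SL(2,ℤ)-orbit if and only if gcd(gcd(a, c), p) = gcd(gcd(a', c'), p). -/
/-- The integer lattice `ℤ² ⊂ ℝ²`, as an additive subgroup of `Fin 2 → ℝ`. -/
def intLattice : AddSubgroup (Fin 2 → ℝ) where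
  carrier := {v | ∀ i, ∃ n : ℤ, v i = (n : ℝ)}
  zero_mem' := fun i => ⟨0, by simp⟩
  add_mem' := by
    intro a b ha hb i
    obtain ⟨n, hn⟩ := ha i
    obtain ⟨m, hm⟩ := hb i
    exact ⟨n + m, by simp [hn, hm]⟩
  neg_mem' := by
    intro a ha i
    obtain ⟨n, hn⟩ := ha i
    exact ⟨-n, by simp [hn]⟩

/-- The torus `ℝ²/ℤ²`. -/
abbrev Torus : Type := (Fin 2 → ℝ) ⧸ intLattice

/-- The natural action of `SL(2,ℤ)` on `ℝ²` by matrix multiplication on column vectors. -/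
noncomputable def sl2zAct (A : Matrix.SpecialLinearGroup (Fin 2) ℤ) (v : Fin 2 → ℝ) :
    Fin 2 → ℝ :=
  ((A : Matrix (Fin 2) (Fin 2) ℤ).map fun n => (n : ℝ)).mulVec v

/-- The `SL(2,ℤ)`-orbit of the torus point represented by `v ∈ ℝ²`. -/
def torusOrbit (v : Fin 2 → ℝ) : Set Torus :=
  {x | ∃ A : Matrix.SpecialLinearGroup (Fin 2) ℤ,
    (QuotientAddGroup.mk (sl2zAct A v) : Torus) = x}

/-!
Reduced modulo `p`, the torus point `(a/p, c/p)` is the vector `(a, c) ∈ (ℤ/p)²`, on which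
`SL(2,ℤ)` acts through reduction of its entries. Euclid's algorithm, performed by `SL(2,ℤ)`,
carries `(a, c)` to `(d, 0)` with `d = gcd(a, c)`; as `(d, 0) ≡ (d, p)`, a second application
reaches `(gcd(d, p), 0)`. Conversely `gcd(a, c, p)` divides every entry of every vector in the
orbit of `(a, c)` modulo `p`, so it is an orbit invariant.
-/

open Matrix MatrixGroups

namespace Matrix.SpecialLinearGroup

variable {n R : Type*} [DecidableEq n] [Fintype n] [CommRing R]

theorem map_intCast_smul (A : SpecialLinearGroup n ℤ) (v : n → ℤ) :
    (A : SpecialLinearGroup n R) • (Int.cast ∘ v : n → R) = Int.cast ∘ (A • v) := by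
  ext i
  simp only [SpecialLinearGroup.smul_def, smul_eq_mulVec, coe_matrix_coe, Function.comp_apply]
  exact (RingHom.map_mulVec (Int.castRingHom R) _ v i).symm

theorem dvd_smul_apply {g : R} (A : SpecialLinearGroup n R) {v : n → R} (hv : ∀ j, g ∣ v j)
    (i : n) : g ∣ (A • v) i :=
  Finset.dvd_sum fun j _ => (hv j).mul_left _

theorem smul_apply_fin_two (A : SL(2, R)) (v : Fin 2 → R) (i : Fin 2) :
    (A • v) i = A i 0 * v 0 + A i 1 * v 1 := by
  simp [SpecialLinearGroup.smul_def, mulVec, dotProduct, Fin.sum_univ_two]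

theorem exists_smul_eq_single_gcd (v : Fin 2 → ℤ) :
    ∃ A : SL(2, ℤ), A • v = Pi.single 0 (Int.gcd (v 0) (v 1) : ℤ) := by
  rcases eq_or_ne (Int.gcd (v 0) (v 1)) 0 with hd | hd
  · obtain ⟨h0, h1⟩ := Int.gcd_eq_zero_iff.mp hd
    refine ⟨1, ?_⟩
    ext i; fin_cases i <;> simp [h0, h1]
  obtain ⟨a, ha⟩ := Int.gcd_dvd_left (v 0) (v 1)
  obtain ⟨c, hc⟩ := Int.gcd_dvd_right (v 0) (v 1)
  have hcop : IsCoprime (-c) a := by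
    refine ⟨-Int.gcdB (v 0) (v 1), Int.gcdA (v 0) (v 1),
      mul_left_cancel₀ (Int.natCast_ne_zero.mpr hd) ?_⟩
    linear_combination -Int.gcdA (v 0) (v 1) * ha - Int.gcdB (v 0) (v 1) * hc -
      Int.gcd_eq_gcd_ab (v 0) (v 1)
  obtain ⟨A, hA0, hA1⟩ := hcop.exists_SL2_row 1
  have hdet : A 0 0 * a + A 0 1 * c = 1 := by
    have := A.det_coe
    rw [det_fin_two, hA0, hA1] at this
    linear_combination this
  refine ⟨A, funext <| Fin.forall_fin_two.mpr ⟨?_, ?_⟩⟩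
  · rw [smul_apply_fin_two, Pi.single_eq_same]
    linear_combination (A 0 0) * ha + (A 0 1) * hc + ((v 0).gcd (v 1) : ℤ) * hdet
  · rw [smul_apply_fin_two, hA0, hA1, Pi.single_eq_of_ne one_ne_zero]
    linear_combination -c * ha + a * hc

theorem exists_smul_intCast_eq_single_gcd (p : ℕ) (v : Fin 2 → ℤ) :
    ∃ A : SL(2, ℤ), (A : SL(2, ZMod p)) • (Int.cast ∘ v : Fin 2 → ZMod p) =
      Int.cast ∘ Pi.single 0 (Nat.gcd (Int.gcd (v 0) (v 1)) p : ℤ) := by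
  obtain ⟨A, hA⟩ := exists_smul_eq_single_gcd v
  set d : ℕ := Int.gcd (v 0) (v 1)
  -- modulo `p`, `(d, 0) = (d, p)`, and Euclid over `ℤ` carries `(d, p)` to `(gcd d p, 0)`
  obtain ⟨B, hB⟩ := exists_smul_eq_single_gcd ![(d : ℤ), p]
  have hdp : (Int.cast ∘ Pi.single 0 (d : ℤ) : Fin 2 → ZMod p) = Int.cast ∘ ![(d : ℤ), p] := by
    ext i; fin_cases i <;> simp
  refine ⟨B * A, ?_⟩
  rw [map_mul, mul_smul, map_intCast_smul, hA, hdp, map_intCast_smul, hB]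
  simp [Int.gcd_natCast_natCast]

theorem gcd_dvd_gcd_of_smul_intCast_eq {p : ℕ} {v w : Fin 2 → ℤ} (A : SL(2, ℤ))
    (h : (A : SL(2, ZMod p)) • (Int.cast ∘ v : Fin 2 → ZMod p) = Int.cast ∘ w) :
    Nat.gcd (Int.gcd (v 0) (v 1)) p ∣ Nat.gcd (Int.gcd (w 0) (w 1)) p := by
  rw [map_intCast_smul] at h
  set g := Nat.gcd (Int.gcd (v 0) (v 1)) p
  have hgp : (g : ℤ) ∣ p := Int.natCast_dvd_natCast.mpr (Nat.gcd_dvd_right _ _)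
  have hgv : ∀ j, (g : ℤ) ∣ v j := by
    have := Int.natCast_dvd_natCast.mpr (Nat.gcd_dvd_left (Int.gcd (v 0) (v 1)) p)
    intro j; fin_cases j
    exacts [this.trans (Int.gcd_dvd_left _ _), this.trans (Int.gcd_dvd_right _ _)]
  have hgw : ∀ i, (g : ℤ) ∣ w i := fun i => by
    have hi := congrFun h i
    rw [Function.comp_apply, Function.comp_apply, ZMod.intCast_eq_intCast_iff_dvd_sub] at hi
    simpa using (hgp.trans hi).add (dvd_smul_apply A hgv i)
  exact Nat.dvd_gcd (Int.natCast_dvd_natCast.mp (Int.dvd_coe_gcd (hgw 0) (hgw 1)))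
    (Nat.gcd_dvd_right _ _)

end Matrix.SpecialLinearGroup

theorem mem_intLattice {v : Fin 2 → ℝ} : v ∈ intLattice ↔ ∀ i, ∃ n : ℤ, v i = n := Iff.rfl

theorem sl2zAct_intCast_div (A : SL(2, ℤ)) (v : Fin 2 → ℤ) (r : ℝ) :
    sl2zAct A (fun i => (v i : ℝ) / r) = fun i => ((A • v) i : ℝ) / r := by
  ext i
  simp only [sl2zAct, mulVec, dotProduct, map_apply, Fin.sum_univ_two,
    SpecialLinearGroup.smul_apply_fin_two, Int.cast_add, Int.cast_mul]
  ring

theorem exists_intCast_div_eq_intCast_iff {K : Type*} [Field K] [CharZero K] {p : ℕ} (hp : p ≠ 0)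
    (m : ℤ) : (∃ n : ℤ, (m : K) / p = n) ↔ (p : ℤ) ∣ m := by
  have hp' : (p : K) ≠ 0 := Nat.cast_ne_zero.mpr hp
  constructor
  · rintro ⟨n, hn⟩
    refine ⟨n, ?_⟩
    rw [div_eq_iff hp'] at hn
    exact_mod_cast hn.trans (mul_comm _ _)
  · rintro ⟨n, rfl⟩
    exact ⟨n, by push_cast; field_simp⟩

theorem torus_mk_sl2zAct_div_eq_iff {p : ℕ} (hp : p ≠ 0) (A : SL(2, ℤ)) (v w : Fin 2 → ℤ) :
    (QuotientAddGroup.mk (sl2zAct A fun i => (v i : ℝ) / p) : Torus) =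
        QuotientAddGroup.mk (fun i => (w i : ℝ) / p) ↔
      (A : SL(2, ZMod p)) • (Int.cast ∘ v : Fin 2 → ZMod p) = Int.cast ∘ w := by
  rw [SpecialLinearGroup.map_intCast_smul, QuotientAddGroup.eq, mem_intLattice, funext_iff,
    sl2zAct_intCast_div]
  refine forall_congr' fun i => ?_
  rw [Function.comp_apply, Function.comp_apply, ZMod.intCast_eq_intCast_iff_dvd_sub,
    ← exists_intCast_div_eq_intCast_iff (K := ℝ) hp]
  push_cast [sub_div]
  simp only [Pi.add_apply, Pi.neg_apply, neg_add_eq_sub]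

/-- The torus points `(a/p, c/p)` and `(a'/p, c'/p)` lie in the same `SL(2,ℤ)`-orbit
if and only if `gcd(gcd(a,c),p) = gcd(gcd(a',c'),p)`. -/
theorem same_sl2z_orbit_iff_gcd_eq (p : ℕ) (hp : 1 ≤ p) (a c a' c' : ℤ) :
    (∃ A : Matrix.SpecialLinearGroup (Fin 2) ℤ,
        (QuotientAddGroup.mk (sl2zAct A ![(a : ℝ) / p, (c : ℝ) / p]) : Torus)
          = (QuotientAddGroup.mk ![(a' : ℝ) / p, (c' : ℝ) / p] : Torus)) ↔
      Nat.gcd (Int.gcd a c) p = Nat.gcd (Int.gcd a' c') p := by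
  have hvec (x y : ℤ) : ![(x : ℝ) / p, (y : ℝ) / p] = fun i => (![x, y] i : ℝ) / p := by
    ext i; fin_cases i <;> rfl
  simp only [hvec, torus_mk_sl2zAct_div_eq_iff (Nat.one_le_iff_ne_zero.mp hp)]
  constructor
  · rintro ⟨A, hA⟩
    refine Nat.dvd_antisymm (SpecialLinearGroup.gcd_dvd_gcd_of_smul_intCast_eq A hA)
      (SpecialLinearGroup.gcd_dvd_gcd_of_smul_intCast_eq (v := ![a', c']) (w := ![a, c]) A⁻¹ ?_)
    rw [map_inv, inv_smul_eq_iff, hA]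
  · intro h
    obtain ⟨A, hA⟩ := SpecialLinearGroup.exists_smul_intCast_eq_single_gcd p ![a, c]
    obtain ⟨B, hB⟩ := SpecialLinearGroup.exists_smul_intCast_eq_single_gcd p ![a', c']
    refine ⟨B⁻¹ * A, ?_⟩
    rw [map_mul, mul_smul, hA, map_inv, inv_smul_eq_iff, hB]
    simp [h]
end

section
/- For every integer p ≥ 1, the finite subgroup L_{1/p} = {(a/p, c/p) mod ℤ² : a, c ∈ ℤ} of the torus ℝ²/ℤ² is the disjoint union, over the positive divisors d of p, of the SL(2,ℤ)-orbits O_{1/d} of the points (0, 1/d) mod ℤ². -/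
/-- The `p`-torsion subgroup `L_{1/p} = {(a/p, c/p) mod ℤ²}` of the torus, as a set. -/
def torsionSet (p : ℕ) : Set Torus :=
  {x | ∃ a c : ℤ, (QuotientAddGroup.mk ![(a : ℝ) / p, (c : ℝ) / p] : Torus) = x}

/-!
A matrix `A ∈ SL(2,ℤ)` preserves `ℤ²`, and so does `A⁻¹`, so `A` induces an automorphism of the
torus and preserves the order of its points. Hence `O_{1/d}` consists of points of exact order `d`.
Conversely, a point of order `d` is `(a/d, c/d)` with `gcd(a, c, d) = 1`; the pair `(a, c)` lifts
modulo `d` to a coprime pair `(b, e)`, which is the second column of some `A ∈ SL(2,ℤ)`, and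
`A (0, 1/d) = (b/d, e/d) ≡ (a/d, c/d)`. So `O_{1/d}` is the set of points of order `d`, while
`L_{1/p}` is the set of points whose order divides `p`.
-/

lemma exists_intCast_eq_div_iff {K : Type*} [Field K] [CharZero K] {a : ℤ} {d : ℕ} (hd : d ≠ 0) :
    (∃ n : ℤ, (a : K) / d = n) ↔ (d : ℤ) ∣ a := by
  have hd' : (d : K) ≠ 0 := by exact_mod_cast hd
  constructor
  · rintro ⟨n, hn⟩
    exact ⟨n, by rw [div_eq_iff hd', mul_comm] at hn; exact_mod_cast hn⟩
  · rintro ⟨n, rfl⟩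
    exact ⟨n, by push_cast; field_simp⟩

lemma addOrderOf_eq_of_forall_zsmul_eq_zero_iff {G : Type*} [AddGroup G] {x : G} {d : ℕ}
    (h : ∀ n : ℤ, n • x = 0 ↔ (d : ℤ) ∣ n) : addOrderOf x = d := by
  refine Nat.dvd_antisymm ?_ ?_
  · exact Int.natCast_dvd_natCast.1 (addOrderOf_dvd_iff_zsmul_eq_zero.2 ((h d).2 dvd_rfl))
  · exact Int.natCast_dvd_natCast.1 ((h _).1 (addOrderOf_dvd_iff_zsmul_eq_zero.1 dvd_rfl))

lemma exists_add_mul_eq_one_of_forall_dvd {a c d : ℤ} (hd : d ≠ 0)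
    (h : ∀ n, d ∣ n * a → d ∣ n * c → d ∣ n) : ∃ u v w, u * a + v * c + w * d = 1 := by
  obtain ⟨a', ha⟩ := (Int.gcd_dvd_left _ d).trans (Int.gcd_dvd_left a c)
  obtain ⟨c', hc⟩ := (Int.gcd_dvd_left _ d).trans (Int.gcd_dvd_right a c)
  obtain ⟨d', hd'⟩ := Int.gcd_dvd_right (Int.gcd a c) d
  have hd'0 : d' ≠ 0 := by rintro rfl; exact hd (by simpa using hd')
  have hdd' : d ∣ d' := h d' ⟨a', by linear_combination d' * ha - a' * hd'⟩
    ⟨c', by linear_combination d' * hc - c' * hd'⟩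
  have hcop : IsCoprime (Int.gcd a c : ℤ) d := by
    rw [Int.isCoprime_iff_gcd_eq_one, ← Int.natCast_inj]
    exact Int.eq_one_of_dvd_one (Int.natCast_nonneg _)
      ((mul_dvd_mul_iff_right hd'0).1 (by rwa [one_mul, ← hd']))
  obtain ⟨x, y, hxy⟩ := hcop
  exact ⟨x * Int.gcdA a c, x * Int.gcdB a c, y, by rw [← hxy, Int.gcd_eq_gcd_ab]; ring⟩

lemma exists_isCoprime_modEq {a c d : ℤ} (h : ∃ u v w, u * a + v * c + w * d = 1) :
    ∃ b e, IsCoprime b e ∧ b ≡ a [ZMOD d] ∧ e ≡ c [ZMOD d] := by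
  obtain ⟨u, v, w, huvw⟩ := h
  rcases eq_or_ne a 0 with rfl | ha
  · exact ⟨d, c, ⟨w, v, by linarith⟩, Int.modEq_iff_dvd.2 ⟨-1, by ring⟩, Int.ModEq.refl c⟩
  -- Lift `c`, a unit modulo `gcd(a, d)`, to a unit `e'` modulo `|a|`; then `e' ≡ c` modulo
  -- `gcd(a, d)`, so `c + d ℤ` meets `e' + a ℤ`, whose elements are all prime to `a`.
  set n := Int.gcd a d
  set m := a.natAbs
  have hnm : n ∣ m := Int.gcd_dvd_natAbs_left a d
  have hcn : IsCoprime (n : ℤ) c := by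
    obtain ⟨a₁, ha₁⟩ := Int.gcd_dvd_left a d
    obtain ⟨d₁, hd₁⟩ := Int.gcd_dvd_right a d
    exact ⟨u * a₁ + w * d₁, v, by linear_combination huvw - u * ha₁ - w * hd₁⟩
  have hcu : IsUnit (c : ZMod n) := (ZMod.coe_int_isUnit_iff_isCoprime c n).2 hcn
  have : NeZero m := ⟨Int.natAbs_ne_zero.2 ha⟩
  obtain ⟨U, hU⟩ := ZMod.unitsMap_surjective hnm hcu.unit
  set e' : ℤ := (U : ZMod m).cast
  have he' : IsCoprime a e' := by
    have := (ZMod.coe_int_isUnit_iff_isCoprime e' m).1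
      (by rw [ZMod.intCast_zmod_cast]; exact U.isUnit)
    rw [Int.isCoprime_iff_nat_coprime] at this ⊢
    rwa [Int.natAbs_natCast] at this
  obtain ⟨k, hk⟩ : (n : ℤ) ∣ c - e' := by
    rw [← ZMod.intCast_eq_intCast_iff_dvd_sub, ← ZMod.cast_intCast (R := ZMod n) hnm,
      ZMod.intCast_zmod_cast, ← ZMod.unitsMap_val hnm, hU, IsUnit.unit_spec]
  refine ⟨a, c - d * (Int.gcdB a d * k), ?_, Int.ModEq.refl a,
    Int.modEq_iff_dvd.2 ⟨Int.gcdB a d * k, by ring⟩⟩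
  have hn := Int.gcd_eq_gcd_ab a d
  have he : c - d * (Int.gcdB a d * k) = e' + a * (Int.gcdA a d * k) := by
    linear_combination hk + k * hn
  rw [he]
  exact he'.add_mul_left_right _

open QuotientAddGroup

namespace Torus

lemma mk_div_eq_zero_iff {d : ℕ} (hd : d ≠ 0) (a c : ℤ) :
    (mk ![(a : ℝ) / d, (c : ℝ) / d] : Torus) = 0 ↔ (d : ℤ) ∣ a ∧ (d : ℤ) ∣ c := by
  rw [eq_zero_iff]
  show (∀ i, _) ↔ _
  simp [Fin.forall_fin_two, exists_intCast_eq_div_iff hd]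

lemma mk_div_eq_mk_div_iff {d : ℕ} (hd : d ≠ 0) (a c a' c' : ℤ) :
    (mk ![(a : ℝ) / d, (c : ℝ) / d] : Torus) = mk ![(a' : ℝ) / d, (c' : ℝ) / d] ↔
      a ≡ a' [ZMOD d] ∧ c ≡ c' [ZMOD d] := by
  have hsub : ![(a' : ℝ) / d, (c' : ℝ) / d] - ![(a : ℝ) / d, (c : ℝ) / d] =
      ![((a' - a : ℤ) : ℝ) / d, ((c' - c : ℤ) : ℝ) / d] := by
    ext i
    fin_cases i <;> simp [sub_div]
  rw [eq_comm, ← sub_eq_zero, ← mk_sub, hsub, mk_div_eq_zero_iff hd, Int.modEq_iff_dvd,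
    Int.modEq_iff_dvd]

lemma zsmul_mk_div (n a c : ℤ) (d : ℕ) :
    n • (mk ![(a : ℝ) / d, (c : ℝ) / d] : Torus) =
      mk ![((n * a : ℤ) : ℝ) / d, ((n * c : ℤ) : ℝ) / d] := by
  rw [← mk_zsmul]
  congr 1
  ext i
  fin_cases i <;> simp [mul_div_assoc]

lemma zsmul_mk_div_eq_zero_iff {d : ℕ} (hd : d ≠ 0) (n a c : ℤ) :
    n • (mk ![(a : ℝ) / d, (c : ℝ) / d] : Torus) = 0 ↔ (d : ℤ) ∣ n * a ∧ (d : ℤ) ∣ n * c := by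
  rw [zsmul_mk_div, mk_div_eq_zero_iff hd]

lemma exists_mk_div_eq_of_nsmul_eq_zero {d : ℕ} (hd : d ≠ 0) {x : Torus} (hx : d • x = 0) :
    ∃ a c : ℤ, (mk ![(a : ℝ) / d, (c : ℝ) / d] : Torus) = x := by
  induction x using QuotientAddGroup.induction_on with | H v => ?_
  rw [← mk_nsmul, eq_zero_iff] at hx
  obtain ⟨a, ha⟩ := hx 0
  obtain ⟨c, hc⟩ := hx 1
  refine ⟨a, c, congrArg mk ?_⟩
  have hd' : (d : ℝ) ≠ 0 := by exact_mod_cast hd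
  ext i
  fin_cases i
  · simp [← ha, hd']
  · simp [← hc, hd']

lemma addOrderOf_mk_zero_one_div {d : ℕ} (hd : d ≠ 0) :
    addOrderOf (mk ![0, 1 / (d : ℝ)] : Torus) = d := by
  have hv : ![0, 1 / (d : ℝ)] = ![((0 : ℤ) : ℝ) / d, ((1 : ℤ) : ℝ) / d] := by simp
  rw [hv]
  exact addOrderOf_eq_of_forall_zsmul_eq_zero_iff fun n => by
    rw [zsmul_mk_div_eq_zero_iff hd]
    simp

end Torus

section SL2Action

variable (A B : Matrix.SpecialLinearGroup (Fin 2) ℤ)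

lemma sl2zAct_intCast (n : Fin 2 → ℤ) :
    sl2zAct A (fun i => (n i : ℝ)) = fun i => (A.1.mulVec n i : ℝ) :=
  funext fun i => ((Int.castRingHom ℝ).map_mulVec A.1 n i).symm

lemma sl2zAct_mul (v : Fin 2 → ℝ) : sl2zAct (A * B) v = sl2zAct A (sl2zAct B v) := by
  rw [sl2zAct, sl2zAct, sl2zAct, Matrix.mulVec_mulVec, Matrix.SpecialLinearGroup.coe_mul]
  exact congrArg (Matrix.mulVec · v) (Matrix.map_mul (f := Int.castRingHom ℝ))

lemma sl2zAct_one (v : Fin 2 → ℝ) : sl2zAct 1 v = v := by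
  simp [sl2zAct]

lemma sl2zAct_nsmul (n : ℕ) (v : Fin 2 → ℝ) : sl2zAct A (n • v) = n • sl2zAct A v :=
  Matrix.mulVec_smul _ _ _

lemma sl2zAct_mem_intLattice {v : Fin 2 → ℝ} (hv : v ∈ intLattice) :
    sl2zAct A v ∈ intLattice := by
  choose n hn using hv
  obtain rfl : v = fun i => (n i : ℝ) := funext hn
  rw [sl2zAct_intCast]
  exact fun i => ⟨_, rfl⟩

lemma sl2zAct_mem_intLattice_iff {v : Fin 2 → ℝ} :
    sl2zAct A v ∈ intLattice ↔ v ∈ intLattice := by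
  refine ⟨fun h => ?_, sl2zAct_mem_intLattice A⟩
  simpa [← sl2zAct_mul, sl2zAct_one] using sl2zAct_mem_intLattice A⁻¹ h

lemma addOrderOf_mk_sl2zAct (v : Fin 2 → ℝ) :
    addOrderOf (mk (sl2zAct A v) : Torus) = addOrderOf (mk v : Torus) := by
  refine addOrderOf_eq_addOrderOf_iff.2 fun n => ?_
  rw [← mk_nsmul, ← mk_nsmul, eq_zero_iff, eq_zero_iff, ← sl2zAct_nsmul,
    sl2zAct_mem_intLattice_iff]

lemma sl2zAct_zero_one_div (d : ℕ) :
    sl2zAct A ![0, 1 / (d : ℝ)] = ![(A.1 0 1 : ℝ) / d, (A.1 1 1 : ℝ) / d] := by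
  ext i
  fin_cases i <;> simp [sl2zAct, Matrix.mulVec, dotProduct, Fin.sum_univ_two, div_eq_mul_inv]

end SL2Action

open Torus

lemma torsionSet_eq_setOf_addOrderOf_dvd {p : ℕ} (hp : p ≠ 0) :
    torsionSet p = {x | addOrderOf x ∣ p} := by
  ext x
  change (∃ a c : ℤ, _) ↔ addOrderOf x ∣ p
  rw [addOrderOf_dvd_iff_nsmul_eq_zero]
  constructor
  · rintro ⟨a, c, rfl⟩
    rw [← natCast_zsmul, zsmul_mk_div_eq_zero_iff hp]
    exact ⟨dvd_mul_right _ _, dvd_mul_right _ _⟩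
  · exact exists_mk_div_eq_of_nsmul_eq_zero hp

lemma torusOrbit_zero_one_div {d : ℕ} (hd : d ≠ 0) :
    torusOrbit ![0, 1 / (d : ℝ)] = {x | addOrderOf x = d} := by
  ext x
  constructor
  · rintro ⟨A, rfl⟩
    exact (addOrderOf_mk_sl2zAct A _).trans (addOrderOf_mk_zero_one_div hd)
  · intro hx
    obtain ⟨a, c, rfl⟩ := exists_mk_div_eq_of_nsmul_eq_zero hd (hx ▸ addOrderOf_nsmul_eq_zero x)
    have hprim (n : ℤ) (ha : (d : ℤ) ∣ n * a) (hc : (d : ℤ) ∣ n * c) : (d : ℤ) ∣ n :=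
      hx ▸ addOrderOf_dvd_iff_zsmul_eq_zero.2 ((zsmul_mk_div_eq_zero_iff hd n a c).2 ⟨ha, hc⟩)
    obtain ⟨b, e, hbe, hba, hec⟩ :=
      exists_isCoprime_modEq (exists_add_mul_eq_one_of_forall_dvd (by exact_mod_cast hd) hprim)
    obtain ⟨A, hA0, hA1⟩ := hbe.exists_SL2_col 1
    refine ⟨A, ?_⟩
    rw [sl2zAct_zero_one_div, hA0, hA1, mk_div_eq_mk_div_iff hd]
    exact ⟨hba, hec⟩

/-- `L_{1/p}` is the disjoint union, over the positive divisors `d` of `p`, of the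
`SL(2,ℤ)`-orbits `O_{1/d}` of the points `(0, 1/d) mod ℤ²`. -/
theorem torsion_eq_disjoint_union_orbits (p : ℕ) (hp : 1 ≤ p) :
    (torsionSet p = ⋃ d ∈ Nat.divisors p, torusOrbit ![0, 1 / (d : ℝ)]) ∧
      (Nat.divisors p : Set ℕ).Pairwise fun d d' =>
        Disjoint (torusOrbit ![0, 1 / (d : ℝ)]) (torusOrbit ![0, 1 / (d' : ℝ)]) := by
  have hp0 : p ≠ 0 := by omega
  have orbit_eq {d : ℕ} (hd : d ∈ p.divisors) :
      torusOrbit ![0, 1 / (d : ℝ)] = {x | addOrderOf x = d} :=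
    torusOrbit_zero_one_div (Nat.pos_of_mem_divisors hd).ne'
  constructor
  · ext x
    simp only [torsionSet_eq_setOf_addOrderOf_dvd hp0, Set.mem_iUnion, exists_prop]
    constructor
    · intro (hx : addOrderOf x ∣ p)
      have hmem : addOrderOf x ∈ p.divisors := Nat.mem_divisors.2 ⟨hx, hp0⟩
      exact ⟨_, hmem, by rw [orbit_eq hmem]; rfl⟩
    · rintro ⟨d, hd, hx⟩
      rw [orbit_eq hd] at hx
      exact show addOrderOf x ∣ p from hx ▸ Nat.dvd_of_mem_divisors hd
  · intro d hd d' hd' hne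
    rw [orbit_eq hd, orbit_eq hd']
    exact Set.disjoint_left.2 fun x hx hx' => hne (hx.symm.trans hx')
end

section
/- Let N ≥ 1 be an integer, ε, ε' ∈ {0,1}, and w, w' ∈ ℂ with Re w < 0 and Re w' < 0. Then the following resummation identity of absolutely convergent sums holds: Σ_{m,n ∈ ℤ} Σ_{a=0}^{2N−1} Σ_{c=0}^{2N−1} exp(iπ(c + ε'/2)(n − m)/N) · exp( w·((2a+ε)/(4N) + n)² + w'·((2a+ε)/(4N) + m)² ) = 2N · Σ_{n,k ∈ ℤ} (−1)^{ε'k} · exp( w·((2n+ε)/(4N) + Nk)² + w'·((2n+ε)/(4N) − Nk)² ). (This is the resummation that converts the orbit-average over the lattice L_{1/(2N)} into the Ashkin-Teller spin correlator with spectrum Δ_{n,m} = (n/(2N) + mN)², Δ̄_{n,m} = (n/(2N) − mN)².) -/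
/-!
Summing over `c` first gives a character sum of `ℤ/2Nℤ`: it vanishes unless `n ≡ m (mod 2N)`,
and for `n - m = 2Nk` it equals `2N · (-1)^(ε' k)`. The surviving pairs are exactly
`(q + Nk, q - Nk)`, and since `(2a + ε)/(4N) + q = (2j + ε)/(4N)` for `j = 2Nq + a`, division
with remainder `ℤ × Fin (2N) ≃ ℤ` turns the sum over `(q, k, a)` into the sum over `(j, k)`.
The rearrangement is justified by the absolute convergence of the Gaussian sum on the right.
-/

open Complex Finset

lemma summable_exp_mul_int_add_sq {b : ℝ} (hb : b < 0) (s : ℝ) :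
    Summable fun n : ℤ => Real.exp (b * (n + s) ^ 2) := by
  have ht : 0 < -b / Real.pi := div_pos (neg_pos.mpr hb) Real.pi_pos
  convert HurwitzKernelBounds.summable_f_int 0 s ht using 2 with n
  rw [HurwitzKernelBounds.f_int, pow_zero, one_mul]
  congr 1
  field_simp

theorem IsPrimitiveRoot.geom_sum_zpow {K : Type*} [Field K] {ζ : K} {n : ℕ}
    (hζ : IsPrimitiveRoot ζ n) (d : ℤ) :
    ∑ c ∈ range n, (ζ ^ d) ^ c = if (n : ℤ) ∣ d then (n : K) else 0 := by
  split_ifs with h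
  · simp [(hζ.zpow_eq_one_iff_dvd d).mpr h]
  · have hpow : (ζ ^ d) ^ n = 1 := by
      rw [← zpow_natCast, ← zpow_mul, mul_comm, zpow_mul, zpow_natCast, hζ.pow_eq_one,
        one_zpow]
    rw [geom_sum_eq ((hζ.zpow_eq_one_iff_dvd d).not.mpr h), hpow, sub_self, zero_div]

lemma norm_exp_mul_sq_add_mul_sq (w w' : ℂ) (x x' : ℝ) :
    ‖exp (w * (x : ℂ) ^ 2 + w' * (x' : ℂ) ^ 2)‖ =
      Real.exp (w.re * x ^ 2 + w'.re * x' ^ 2) := by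
  rw [norm_exp]
  simp [← ofReal_pow]

lemma sum_range_exp_pi_mul_I_twisted {N : ℕ} (hN : N ≠ 0) (ε' n m : ℤ) :
    ∑ c ∈ range (2 * N), exp (I * Real.pi * ((c : ℂ) + ε' / 2) * ((n : ℂ) - m) / N) =
      if (2 * N : ℤ) ∣ n - m then 2 * N * exp (I * Real.pi * ε' * ((n : ℂ) - m) / (2 * N))
      else 0 := by
  have hζ := isPrimitiveRoot_exp (2 * N) (by omega)
  have hterm : ∀ c : ℕ, exp (I * Real.pi * ((c : ℂ) + ε' / 2) * ((n : ℂ) - m) / N) =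
      exp (I * Real.pi * ε' * ((n : ℂ) - m) / (2 * N)) *
        (exp (2 * Real.pi * I / (2 * N : ℕ)) ^ (n - m)) ^ c := by
    intro c
    rw [← exp_int_mul, ← exp_nat_mul, ← exp_add]
    congr 1
    push_cast
    field_simp
    ring
  rw [sum_congr rfl fun c _ => hterm c, ← mul_sum, hζ.geom_sum_zpow]
  push_cast
  split_ifs <;> ring

def intProdFinEquiv (n : ℕ) [NeZero n] : (ℤ × ℤ) × Fin n ≃ ℤ × ℤ where
  toFun x := ((Int.divModEquiv n).symm (x.1.1, x.2), x.1.2)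
  invFun p := (((Int.divModEquiv n p.1).1, p.2), (Int.divModEquiv n p.1).2)
  left_inv := fun ⟨⟨q, k⟩, a⟩ => by simp only [Equiv.apply_symm_apply]
  right_inv := fun ⟨j, k⟩ => by simp only [Prod.mk.eta, Equiv.symm_apply_apply]

theorem HasSum.sum_fin_int_mul_add {α : Type*} [AddCommMonoid α] [TopologicalSpace α]
    [ContinuousAdd α] [RegularSpace α] {f : ℤ × ℤ → α} {s : α} (hf : HasSum f s)
    (n : ℕ) [NeZero n] :
    HasSum (fun p : ℤ × ℤ => ∑ a : Fin n, f (p.1 * n + a, p.2)) s :=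
  ((intProdFinEquiv n).hasSum_iff.mpr hf).prod_fiberwise fun _ => hasSum_fintype _

section AshkinTeller

variable (N : ℕ) (ε ε' : ℤ) (w w' : ℂ)

noncomputable def latticeOrbitTerm (nm : ℤ × ℤ) : ℂ :=
  ∑ a ∈ range (2 * N), ∑ c ∈ range (2 * N),
    exp (I * Real.pi * ((c : ℂ) + ε' / 2) * ((nm.1 : ℂ) - nm.2) / N) *
      exp (w * ((2 * (a : ℂ) + ε) / (4 * N) + nm.1) ^ 2
        + w' * ((2 * (a : ℂ) + ε) / (4 * N) + nm.2) ^ 2)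

noncomputable def spinCorrelatorTerm (nk : ℤ × ℤ) : ℂ :=
  (-1 : ℂ) ^ (ε' * nk.2) *
    exp (w * ((2 * (nk.1 : ℂ) + ε) / (4 * N) + N * nk.2) ^ 2
      + w' * ((2 * (nk.1 : ℂ) + ε) / (4 * N) - N * nk.2) ^ 2)

variable {N}

lemma latticeOrbitTerm_eq (hN : N ≠ 0) (n m : ℤ) :
    latticeOrbitTerm N ε ε' w w' (n, m) =
      if (2 * N : ℤ) ∣ n - m then
        2 * N * exp (I * Real.pi * ε' * ((n : ℂ) - m) / (2 * N)) *
          ∑ a ∈ range (2 * N), exp (w * ((2 * (a : ℂ) + ε) / (4 * N) + n) ^ 2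
            + w' * ((2 * (a : ℂ) + ε) / (4 * N) + m) ^ 2)
      else 0 := by
  simp only [latticeOrbitTerm, ← sum_mul, sum_range_exp_pi_mul_I_twisted hN]
  split_ifs
  · rw [mul_sum]
  · simp

lemma support_latticeOrbitTerm_subset (hN : N ≠ 0) :
    Function.support (latticeOrbitTerm N ε ε' w w') ⊆
      Set.range fun qk : ℤ × ℤ => (qk.1 + N * qk.2, qk.1 - N * qk.2) := by
  rintro ⟨n, m⟩ hnm
  rw [Function.mem_support, latticeOrbitTerm_eq ε ε' w w' hN] at hnm
  obtain ⟨k, hk⟩ : (2 * N : ℤ) ∣ n - m := by by_contra h; exact hnm (if_neg h)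
  exact ⟨(m + N * k, k), by simp only [Prod.mk.injEq]; constructor <;> linarith⟩

lemma latticeOrbitTerm_diagonal (hN : N ≠ 0) (q k : ℤ) :
    latticeOrbitTerm N ε ε' w w' (q + N * k, q - N * k) =
      2 * N * ∑ a : Fin (2 * N), spinCorrelatorTerm N ε ε' w w' (q * (2 * N : ℕ) + a, k) := by
  have hphase :
      exp (I * Real.pi * ε' * (((q + N * k : ℤ) : ℂ) - (q - N * k : ℤ)) / (2 * N)) =
        (-1) ^ (ε' * k) := by
    rw [← exp_pi_mul_I, ← exp_int_mul]
    congr 1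
    push_cast
    field_simp
    ring
  rw [latticeOrbitTerm_eq ε ε' w w' hN, if_pos ⟨k, by ring⟩, hphase, mul_assoc, mul_sum,
    Fin.sum_univ_eq_sum_range
      (fun a => spinCorrelatorTerm N ε ε' w w' (q * (2 * N : ℕ) + a, k))]
  refine congrArg _ (sum_congr rfl fun a _ => ?_)
  simp only [spinCorrelatorTerm]
  congr 2
  push_cast
  field_simp
  ring

lemma summable_spinCorrelatorTerm (hN : N ≠ 0) (hw : w.re < 0) (hw' : w'.re < 0) :
    Summable (spinCorrelatorTerm N ε ε' w w') := by
  set c := max w.re w'.re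
  have hc : c < 0 := max_lt hw hw'
  have hbound := (summable_exp_mul_int_add_sq (b := c / (2 * N ^ 2))
    (div_neg_of_neg_of_pos hc (by positivity)) (ε / 2)).mul_of_nonneg
    (summable_exp_mul_int_add_sq (b := 2 * c * N ^ 2)
    (mul_neg_of_neg_of_pos (by linarith) (by positivity)) 0)
    (fun _ => (Real.exp_pos _).le) (fun _ => (Real.exp_pos _).le)
  refine Summable.of_norm_bounded hbound fun ⟨j, k⟩ => ?_
  set y : ℝ := (2 * j + ε) / (4 * N)
  have hterm : spinCorrelatorTerm N ε ε' w w' (j, k) =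
      (-1) ^ (ε' * k) *
        exp (w * ((y + N * k : ℝ) : ℂ) ^ 2 + w' * ((y - N * k : ℝ) : ℂ) ^ 2) := by
    simp only [spinCorrelatorTerm, y]
    push_cast
    ring
  rw [hterm, norm_mul, norm_zpow, norm_neg, norm_one, one_zpow, one_mul,
    norm_exp_mul_sq_add_mul_sq, ← Real.exp_add, Real.exp_le_exp]
  have h1 := mul_le_mul_of_nonneg_right (le_max_left w.re w'.re) (sq_nonneg (y + N * k))
  have h2 := mul_le_mul_of_nonneg_right (le_max_right w.re w'.re) (sq_nonneg (y - N * k))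
  have hsplit : c / (2 * N ^ 2) * ((j : ℝ) + ε / 2) ^ 2 + 2 * c * N ^ 2 * ((k : ℝ) + 0) ^ 2 =
      c * (y + N * k) ^ 2 + c * (y - N * k) ^ 2 := by
    simp only [y]
    field_simp
    ring
  linarith

end AshkinTeller

lemma Int.injective_add_mul_sub_mul {a : ℤ} (ha : a ≠ 0) :
    Function.Injective fun qk : ℤ × ℤ => (qk.1 + a * qk.2, qk.1 - a * qk.2) := by
  rintro ⟨q, k⟩ ⟨q', k'⟩ h
  simp only [Prod.mk.injEq] at h
  have hk : k = k' := mul_left_cancel₀ ha (by linarith)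
  subst hk
  simp only [Prod.mk.injEq, and_true]
  linarith

theorem ashkin_teller_resummation_general (N : ℕ) (hN : 1 ≤ N) (ε ε' : ℤ) (w w' : ℂ)
    (hw : w.re < 0) (hw' : w'.re < 0) :
    (∑' nm : ℤ × ℤ, ∑ a ∈ Finset.range (2 * N), ∑ c ∈ Finset.range (2 * N),
        Complex.exp (Complex.I * (Real.pi : ℂ) * ((c : ℂ) + (ε' : ℂ) / 2)
            * ((nm.1 : ℂ) - (nm.2 : ℂ)) / (N : ℂ)) *
          Complex.exp (w * ((2 * (a : ℂ) + (ε : ℂ)) / (4 * (N : ℂ)) + (nm.1 : ℂ)) ^ 2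
            + w' * ((2 * (a : ℂ) + (ε : ℂ)) / (4 * (N : ℂ)) + (nm.2 : ℂ)) ^ 2))
      = 2 * (N : ℂ) *
        ∑' nk : ℤ × ℤ, (-1 : ℂ) ^ (ε' * nk.2) *
          Complex.exp (w * ((2 * (nk.1 : ℂ) + (ε : ℂ)) / (4 * (N : ℂ))
              + (N : ℂ) * (nk.2 : ℂ)) ^ 2
            + w' * ((2 * (nk.1 : ℂ) + (ε : ℂ)) / (4 * (N : ℂ))
              - (N : ℂ) * (nk.2 : ℂ)) ^ 2) := by
  have hN0 : N ≠ 0 := by omega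
  have : NeZero (2 * N) := ⟨by omega⟩
  change ∑' nm, latticeOrbitTerm N ε ε' w w' nm =
    2 * N * ∑' nk, spinCorrelatorTerm N ε ε' w w' nk
  rw [← (Int.injective_add_mul_sub_mul (a := N) (by omega)).tsum_eq
    (support_latticeOrbitTerm_subset ε ε' w w' hN0)]
  simp only [latticeOrbitTerm_diagonal ε ε' w w' hN0, tsum_mul_left]
  exact congrArg _ ((summable_spinCorrelatorTerm ε ε' w w' hN0 hw hw').hasSum
    |>.sum_fin_int_mul_add (2 * N)).tsum_eq

/-- The resummation identity converting the orbit-average over the lattice `L_{1/(2N)}`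
into the Ashkin–Teller spin correlator with spectrum
`Δ_{n,m} = (n/(2N) + mN)²`, `Δ̄_{n,m} = (n/(2N) − mN)²`. -/
theorem ashkin_teller_resummation (N : ℕ) (hN : 1 ≤ N) (ε ε' : ℤ)
    (hε : ε = 0 ∨ ε = 1) (hε' : ε' = 0 ∨ ε' = 1) (w w' : ℂ)
    (hw : w.re < 0) (hw' : w'.re < 0) :
    (∑' nm : ℤ × ℤ, ∑ a ∈ Finset.range (2 * N), ∑ c ∈ Finset.range (2 * N),
        Complex.exp (Complex.I * (Real.pi : ℂ) * ((c : ℂ) + (ε' : ℂ) / 2)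
            * ((nm.1 : ℂ) - (nm.2 : ℂ)) / (N : ℂ)) *
          Complex.exp (w * ((2 * (a : ℂ) + (ε : ℂ)) / (4 * (N : ℂ)) + (nm.1 : ℂ)) ^ 2
            + w' * ((2 * (a : ℂ) + (ε : ℂ)) / (4 * (N : ℂ)) + (nm.2 : ℂ)) ^ 2))
      = 2 * (N : ℂ) *
        ∑' nk : ℤ × ℤ, (-1 : ℂ) ^ (ε' * nk.2) *
          Complex.exp (w * ((2 * (nk.1 : ℂ) + (ε : ℂ)) / (4 * (N : ℂ))
              + (N : ℂ) * (nk.2 : ℂ)) ^ 2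
            + w' * ((2 * (nk.1 : ℂ) + (ε : ℂ)) / (4 * (N : ℂ))
              - (N : ℂ) * (nk.2 : ℂ)) ^ 2) :=
  ashkin_teller_resummation_general N hN ε ε' w w' hw hw'
end
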